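/- Let HC be a finite recursion-free set of Horn clauses. If the expansion exp(HC) is satisfiable, then HC is not semantically solvable. -/
import Mathlib


namespace Stmt8

/- Horn clauses over a constraint language.
`S` indexes the class of structures, `U s` is the universe of structure `s`,
`V` is the set of first-order variables, `Con` the constraints (interpreted
by `interp`), `Tm` the first-order terms (evaluated by `tval`), `R` the
uninterpreted relation symbols with arities `arity`, and `xvar p` the fixed
vector of argument variables of the relation symbol `p`. -/
variable {S V Con Tm R : Type} (U : S → Type)
  (interp : Con → (s : S) → (V → U s) → Prop)
  (tval : Tm → (s : S) → (V → U s) → U s)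
  (arity : R → ℕ) (xvar : (p : R) → Fin (arity p) → V)

/-- An application p(t₁,…,tₖ) of a relation symbol to terms. -/
structure HAtom (arity : R → ℕ) (Tm : Type) : Type where
  rel : R
  args : Fin (arity rel) → Tm

/-- A Horn clause C ∧ B₁ ∧ … ∧ Bₙ → H; `head = none` encodes head `false`. -/
structure Clause (Con : Type) (arity : R → ℕ) (Tm : Type) : Type where
  c : Con
  body : List (HAtom arity Tm)
  head : Option (HAtom arity Tm)

/-- Interpretation of the relation symbols in a structure s. -/
def RelInterp (s : S) : Type _ := ∀ p : R, (Fin (arity p) → U s) → Prop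

/-- A clause holds in structure s under relation interpretation ρ. -/
def ClauseHoldsSem (s : S) (ρ : RelInterp U arity s) (cl : Clause Con arity Tm) : Prop :=
  ∀ α : V → U s,
    interp cl.c s α →
    (∀ b ∈ cl.body, ρ b.rel fun i => tval (b.args i) s α) →
    (match cl.head with
      | none => False
      | some a => ρ a.rel fun i => tval (a.args i) s α)

/-- Semantic solvability: in every structure of the class there exist
relations making all clauses true. -/
def SemSolvable (HC : List (Clause Con arity Tm)) : Prop :=
  ∀ s : S, ∃ ρ : RelInterp U arity s, ∀ cl ∈ HC, ClauseHoldsSem U interp tval arity s ρ cl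

open Classical in
/-- The assignment obtained from α by overriding the argument variables
of the relation symbol of `a` with the values of the argument terms
(semantic substitution sol(p)[t̄]). -/
noncomputable def override (s : S) (α : V → U s) (a : HAtom arity Tm) : V → U s :=
  fun v => if h : ∃ i, xvar a.rel i = v then tval (a.args (Classical.choose h)) s α else α v

/-- Instantiation sol(p)[t̄] of a relation symbol assignment at an atom. -/
def instA (sol : R → Con) (s : S) (α : V → U s) (a : HAtom arity Tm) : Prop :=
  interp (sol a.rel) s (override U tval arity xvar s α a)

/-- The instantiation sol(h) of a clause h is universally valid. -/
def ClauseHoldsSyn (sol : R → Con) (cl : Clause Con arity Tm) : Prop :=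
  ∀ (s : S) (α : V → U s),
    interp cl.c s α →
    (∀ b ∈ cl.body, instA U interp tval arity xvar sol s α b) →
    (match cl.head with
      | none => False
      | some a => instA U interp tval arity xvar sol s α a)

/-- sol(p) is a constraint "in the n free variables x̄_p": its interpretation
depends only on the designated argument variables. -/
def GoodSol (sol : R → Con) : Prop :=
  ∀ p : R, ∀ (s : S) (α β : V → U s),
    (∀ i, α (xvar p i) = β (xvar p i)) → (interp (sol p) s α ↔ interp (sol p) s β)

/-- Syntactic solvability: there is an assignment of constraints to relation
symbols validating (the universal closure of) every instantiated clause in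
every structure. -/
def SynSolvable (HC : List (Clause Con arity Tm)) : Prop :=
  ∃ sol : R → Con, GoodSol U interp arity xvar sol ∧
    ∀ cl ∈ HC, ClauseHoldsSyn U interp tval arity xvar sol cl
/-- The dependence relation of HC: p →_HC q if some clause has head symbol p
and q occurring in its body. -/
def Dep (HC : List (Clause Con arity Tm)) (p q : R) : Prop :=
  ∃ cl ∈ HC, (∃ a, cl.head = some a ∧ a.rel = p) ∧ (∃ b ∈ cl.body, b.rel = q)

/-- HC is recursion-free: the dependence relation is acyclic. -/
def RecursionFree (HC : List (Clause Con arity Tm)) : Prop :=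
  ∀ p : R, ¬ Relation.TransGen (Dep arity HC) p p

/-- Derivability of a relation-symbol fact in structure s by unfolding the
clauses of HC; for recursion-free HC this captures exactly satisfiability
of the inlined definitions exp'(p(t̄)) in the expansion exp(HC). -/
inductive Deriv (HC : List (Clause Con arity Tm)) (s : S) :
    (p : R) → (Fin (arity p) → U s) → Prop where
  | step (cl : Clause Con arity Tm) (hcl : cl ∈ HC) (a : HAtom arity Tm)
      (hhead : cl.head = some a) (α : V → U s)
      (hc : interp cl.c s α)
      (hb : ∀ b ∈ cl.body, Deriv HC s b.rel fun i => tval (b.args i) s α) :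
      Deriv HC s a.rel fun i => tval (a.args i) s α

/-- Satisfiability of the expansion exp(HC): some structure and assignment
satisfy the inlined body of some clause with head false. -/
def ExpSat (HC : List (Clause Con arity Tm)) : Prop :=
  ∃ (s : S), ∃ cl ∈ HC, cl.head = none ∧
    ∃ α : V → U s, interp cl.c s α ∧
      ∀ b ∈ cl.body, Deriv U interp tval arity HC s b.rel fun i => tval (b.args i) s α

/-- for a finite recursion-free set HC of Horn clauses, if the
expansion exp(HC) is satisfiable, then HC is not semantically solvable. -/
theorem stmt8 (HC : List (Clause Con arity Tm))
    (hrf : RecursionFree arity HC)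
    (hsat : ExpSat U interp tval arity HC) :
    ¬ SemSolvable U interp tval arity HC := by
  intro hsem
  obtain ⟨s, cl, hcl, hhead, α, hc, hb⟩ := hsat
  obtain ⟨ρ, hρ⟩ := hsem s
  have key : ∀ p v, Deriv U interp tval arity HC s p v → ρ p v := by
    intro p v hd
    induction hd with
    | step cl' hcl' a hhead' α' hc' hb' ih =>
      have := hρ cl' hcl' α' hc' (fun b hb => ih b hb)
      rw [hhead'] at this
      exact this
  have := hρ cl hcl α hc (fun b hbb => key _ _ (hb b hbb))
  rw [hhead] at this
  exact this

end Stmt8
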